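/- Let π = (π_h)_{h=1}^H be a deterministic policy, let β^π be defined by the backward recursion with the true kernels T, O, and let β̂ be defined by the same backward recursion with the kernels T̂, Ô and the additional term sgn(γ)·b_h(s_h, a_h), i.e. β̂_{H+1}(s; f_{H+1}) := 1 and β̂_h(s_h; f_h) := exp(γ·r_h(s_h, a_h)) · ∑_{s'∈S} T̂_{h,a_h}(s'|s_h) · ∑_{o'∈O} Ô_{h+1}(o'|s') · β̂_{h+1}(s'; (f_h, a_h, o')) + sgn(γ)·b_h(s_h, a_h) with a_h = π_h(f_h). Assume that for every h ∈ {1,…,H}, every observable history f_h and every s_h ∈ S (with a_h = π_h(f_h)): |∑_{s'∈S} ∑_{o'∈O} (T̂_{h,a_h}(s'|s_h)·Ô_{h+1}(o'|s') − T_{h,a_h}(s'|s_h)·O_{h+1}(o'|s')) · exp(γ·r_h(s_h, a_h)) · β^π_{h+1}(s'; (f_h, a_h, o'))| ≤ b_h(s_h, a_h). Then: if γ > 0, β̂_h(s; f_h) ≥ β^π_h(s; f_h) for all h, f_h, s; and if γ < 0, β̂_h(s; f_h) ≤ β^π_h(s; f_h) for all h, f_h, s. -/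

import Mathlib

/-! Backward induction on the step. Writing `P = T·O`, `P̂ = T̂·Ô` and `E = exp(γ r)`,
the hypothesis on the bonus gives `E·∑ P β ≤ E·∑ P̂ β + b` (for `γ > 0`), and since `P̂ ≥ 0`
the induction hypothesis `β ≤ β̂` at the next step gives `E·∑ P̂ β ≤ E·∑ P̂ β̂`.
Multiplying every inequality by `sgn γ = ±1` handles both signs of `γ` at once. -/

open Finset

noncomputable section

variable {S O A : Type*}

/-- Truncation of a sequence: keep the first `n` values, fill the rest with junk. -/
def truncSeq {X : Type*} [Nonempty X] (f : ℕ → X) (n : ℕ) : ℕ → X :=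
  fun t => if t < n then f t else Classical.arbitrary X

/-- The action chosen by the policy `π` at step `m` given the observable history
recorded in `acts` (indices `< m`) and `obs` (indices `< m`). -/
def polAct [Nonempty A] [Nonempty O] (π : ℕ → (ℕ → A) → (ℕ → O) → A)
    (acts : ℕ → A) (obs : ℕ → O) (m : ℕ) : A :=
  π m (truncSeq acts m) (truncSeq obs m)

/-- Beta vectors defined by the Markovian backward recursion with kernels `Ttr`, `Oem`
and an additional bonus term `sgn(γ)·b_h(s_h,a_h)` (first argument: number of steps
remaining; second argument: current step index `m = h - 1`).  Taking `bon = 0` gives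
the true beta vectors `β^π`. -/
def betaRecB [Fintype S] [Fintype O] [Nonempty A] [Nonempty O]
    (γ : ℝ) (rew : ℕ → S → A → ℝ) (Ttr : ℕ → A → S → S → ℝ) (Oem : ℕ → O → S → ℝ)
    (bon : ℕ → S → A → ℝ) (π : ℕ → (ℕ → A) → (ℕ → O) → A) :
    ℕ → ℕ → (ℕ → A) → (ℕ → O) → S → ℝ
  | 0, _, _, _, _ => 1
  | k + 1, m, acts, obs, s =>
      Real.exp (γ * rew m s (polAct π acts obs m)) *
        (∑ s' : S, Ttr m (polAct π acts obs m) s s' *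
          ∑ o' : O, Oem m o' s' *
            betaRecB γ rew Ttr Oem bon π k (m + 1)
              (Function.update acts m (polAct π acts obs m))
              (Function.update obs m o') s') +
        Real.sign γ * bon m s (polAct π acts obs m)

section NestedSum

variable {ι κ : Type*} [Fintype ι] [Fintype κ]

theorem mul_nestedSum_sub_mul_nestedSum (E : ℝ) (p p' : ι → ℝ) (q q' : ι → κ → ℝ)
    (f : ι → κ → ℝ) :
    E * ∑ i, p' i * ∑ j, q' i j * f i j - E * ∑ i, p i * ∑ j, q i j * f i j =
      ∑ i, ∑ j, (p' i * q' i j - p i * q i j) * E * f i j := by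
  simp only [Finset.mul_sum, ← Finset.sum_sub_distrib]
  exact Finset.sum_congr rfl fun i _ => Finset.sum_congr rfl fun j _ => by ring

theorem sign_mul_nestedSum_le {σ E b : ℝ} (hσ : |σ| = 1) (hE : 0 ≤ E)
    {p p' : ι → ℝ} {q q' : ι → κ → ℝ} {f g : ι → κ → ℝ}
    (hp' : ∀ i, 0 ≤ p' i) (hq' : ∀ i j, 0 ≤ q' i j) (hfg : ∀ i j, σ * f i j ≤ σ * g i j)
    (hb : |∑ i, ∑ j, (p' i * q' i j - p i * q i j) * E * f i j| ≤ b) :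
    σ * (E * ∑ i, p i * ∑ j, q i j * f i j) ≤
      σ * (E * ∑ i, p' i * ∑ j, q' i j * g i j + σ * b) := by
  have hσσ : σ * σ = 1 := by rw [← abs_mul_abs_self, hσ, one_mul]
  have sign_mul_avg : ∀ h : ι → κ → ℝ, σ * (E * ∑ i, p' i * ∑ j, q' i j * h i j) =
      E * ∑ i, p' i * ∑ j, q' i j * (σ * h i j) := by
    intro h
    simp only [Finset.mul_sum]
    exact Finset.sum_congr rfl fun i _ => Finset.sum_congr rfl fun j _ => by ring
  have hmono : σ * (E * ∑ i, p' i * ∑ j, q' i j * f i j) ≤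
      σ * (E * ∑ i, p' i * ∑ j, q' i j * g i j) := by
    rw [sign_mul_avg, sign_mul_avg]
    gcongr E * ∑ i, p' i * ∑ j, q' i j * ?_ with i _ j _
    · exact hp' i
    · exact hq' i j
    · exact hfg i j
  have herr : σ * (E * ∑ i, p i * ∑ j, q i j * f i j) -
      σ * (E * ∑ i, p' i * ∑ j, q' i j * f i j) ≤ b := by
    rw [← mul_sub, ← neg_sub, mul_nestedSum_sub_mul_nestedSum, mul_neg]
    calc -(σ * _) ≤ |σ * _| := neg_le_abs _
      _ = _ := by rw [abs_mul, hσ, one_mul]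
      _ ≤ b := hb
  rw [mul_add, ← mul_assoc σ σ, hσσ, one_mul]
  linarith

end NestedSum

theorem abs_sign_of_ne_zero {r : ℝ} (hr : r ≠ 0) : |Real.sign r| = 1 := by
  rcases Real.sign_apply_eq_of_ne_zero r hr with h | h <;> simp [h]

theorem sign_mul_betaRecB_le [Fintype S] [Fintype O] [Nonempty A] [Nonempty O]
    {H : ℕ} {γ : ℝ} (hγ : γ ≠ 0)
    {Ttr : ℕ → A → S → S → ℝ} {Oem : ℕ → O → S → ℝ}
    {Thad : ℕ → A → S → S → ℝ} {Ohad : ℕ → O → S → ℝ}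
    {rew : ℕ → S → A → ℝ} {bon : ℕ → S → A → ℝ} {π : ℕ → (ℕ → A) → (ℕ → O) → A}
    (hThad0 : ∀ h, h < H → ∀ a s s', 0 ≤ Thad h a s s')
    (hOhad0 : ∀ t, t < H → ∀ o s, 0 ≤ Ohad t o s)
    (hconc : ∀ m, m < H → ∀ (acts : ℕ → A) (obs : ℕ → O) (s : S),
      |∑ s' : S, ∑ o' : O,
          (Thad m (polAct π acts obs m) s s' * Ohad m o' s' -
            Ttr m (polAct π acts obs m) s s' * Oem m o' s') *
            Real.exp (γ * rew m s (polAct π acts obs m)) *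
            betaRecB γ rew Ttr Oem (fun _ _ _ => 0) π (H - (m + 1)) (m + 1)
              (Function.update acts m (polAct π acts obs m))
              (Function.update obs m o') s'| ≤ bon m s (polAct π acts obs m))
    (k m : ℕ) (hkm : m + k = H) (acts : ℕ → A) (obs : ℕ → O) (s : S) :
    Real.sign γ * betaRecB γ rew Ttr Oem (fun _ _ _ => 0) π k m acts obs s ≤
      Real.sign γ * betaRecB γ rew Thad Ohad bon π k m acts obs s := by
  induction k generalizing m acts obs s with
  | zero => simp [betaRecB]
  | succ k ih =>
    have hm : m < H := by omega
    have hconc_m := hconc m hm acts obs s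
    rw [show H - (m + 1) = k by omega] at hconc_m
    simp only [betaRecB, mul_zero, add_zero]
    exact sign_mul_nestedSum_le (abs_sign_of_ne_zero hγ) (Real.exp_pos _).le
      (hThad0 m hm _ s) (fun s' o' => hOhad0 m hm o' s')
      (fun s' o' => ih (m + 1) (by omega) _ _ s') hconc_m

theorem betaRec_optimism_general
    [Fintype S] [Fintype O] [Nonempty O] [Nonempty A]
    (H : ℕ) (γ : ℝ)
    (Ttr : ℕ → A → S → S → ℝ) (Oem : ℕ → O → S → ℝ)
    (Thad : ℕ → A → S → S → ℝ) (Ohad : ℕ → O → S → ℝ)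
    (rew : ℕ → S → A → ℝ) (bon : ℕ → S → A → ℝ)
    (hThad0 : ∀ h, h < H → ∀ a s s', 0 ≤ Thad h a s s')
    (hOhad0 : ∀ t, t < H → ∀ o s, 0 ≤ Ohad t o s)
    (π : ℕ → (ℕ → A) → (ℕ → O) → A)
    (hconc : ∀ m, m < H → ∀ (acts : ℕ → A) (obs : ℕ → O) (s : S),
      |∑ s' : S, ∑ o' : O,
          (Thad m (polAct π acts obs m) s s' * Ohad m o' s' -
            Ttr m (polAct π acts obs m) s s' * Oem m o' s') *
            Real.exp (γ * rew m s (polAct π acts obs m)) *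
            betaRecB γ rew Ttr Oem (fun _ _ _ => 0) π (H - (m + 1)) (m + 1)
              (Function.update acts m (polAct π acts obs m))
              (Function.update obs m o') s'| ≤ bon m s (polAct π acts obs m)) :
    (0 < γ → ∀ m, m ≤ H → ∀ (acts : ℕ → A) (obs : ℕ → O) (s : S),
        betaRecB γ rew Ttr Oem (fun _ _ _ => 0) π (H - m) m acts obs s ≤
          betaRecB γ rew Thad Ohad bon π (H - m) m acts obs s) ∧
    (γ < 0 → ∀ m, m ≤ H → ∀ (acts : ℕ → A) (obs : ℕ → O) (s : S),
        betaRecB γ rew Thad Ohad bon π (H - m) m acts obs s ≤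
          betaRecB γ rew Ttr Oem (fun _ _ _ => 0) π (H - m) m acts obs s) := by
  have key (hγ : γ ≠ 0) (m : ℕ) (hm : m ≤ H) :=
    sign_mul_betaRecB_le hγ hThad0 hOhad0 hconc (H - m) m (by omega)
  refine ⟨fun hpos m hm acts obs s => ?_, fun hneg m hm acts obs s => ?_⟩
  · simpa [Real.sign_of_pos hpos] using key hpos.ne' m hm acts obs s
  · simpa [Real.sign_of_neg hneg] using key hneg.ne m hm acts obs s

/-- Optimism: if the bonus `b_h` dominates the one-step statistical error of the
empirical kernels `T̂, Ô` against the true kernels `T, O` (measured on the true beta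
vectors), then the empirical beta vectors `β̂` (built from `T̂, Ô` with the bonus
`sgn(γ)·b_h`) over-estimate `β^π` when `γ > 0` and under-estimate it when `γ < 0`. -/
theorem betaRec_optimism
    [Fintype S] [Fintype O] [Fintype A] [Nonempty S] [Nonempty O] [Nonempty A]
    (H : ℕ) (hH : 1 ≤ H) (γ : ℝ) (hγ : γ ≠ 0)
    (Ttr : ℕ → A → S → S → ℝ) (Oem : ℕ → O → S → ℝ)
    (Thad : ℕ → A → S → S → ℝ) (Ohad : ℕ → O → S → ℝ)
    (rew : ℕ → S → A → ℝ) (bon : ℕ → S → A → ℝ)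
    (hT0 : ∀ h, h < H → ∀ a s s', 0 ≤ Ttr h a s s')
    (hT1 : ∀ h, h < H → ∀ a s, ∑ s', Ttr h a s s' = 1)
    (hO0 : ∀ t, t < H → ∀ o s, 0 ≤ Oem t o s)
    (hO1 : ∀ t, t < H → ∀ s, ∑ o, Oem t o s = 1)
    (hThad0 : ∀ h, h < H → ∀ a s s', 0 ≤ Thad h a s s')
    (hOhad0 : ∀ t, t < H → ∀ o s, 0 ≤ Ohad t o s)
    (hbon0 : ∀ h, h < H → ∀ s a, 0 ≤ bon h s a)
    (hr : ∀ h, h < H → ∀ s a, rew h s a ∈ Set.Icc (0 : ℝ) 1)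
    (π : ℕ → (ℕ → A) → (ℕ → O) → A)
    (hconc : ∀ m, m < H → ∀ (acts : ℕ → A) (obs : ℕ → O) (s : S),
      |∑ s' : S, ∑ o' : O,
          (Thad m (polAct π acts obs m) s s' * Ohad m o' s' -
            Ttr m (polAct π acts obs m) s s' * Oem m o' s') *
            Real.exp (γ * rew m s (polAct π acts obs m)) *
            betaRecB γ rew Ttr Oem (fun _ _ _ => 0) π (H - (m + 1)) (m + 1)
              (Function.update acts m (polAct π acts obs m))
              (Function.update obs m o') s'| ≤ bon m s (polAct π acts obs m)) :
    (0 < γ → ∀ m, m ≤ H → ∀ (acts : ℕ → A) (obs : ℕ → O) (s : S),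
        betaRecB γ rew Ttr Oem (fun _ _ _ => 0) π (H - m) m acts obs s ≤
          betaRecB γ rew Thad Ohad bon π (H - m) m acts obs s) ∧
    (γ < 0 → ∀ m, m ≤ H → ∀ (acts : ℕ → A) (obs : ℕ → O) (s : S),
        betaRecB γ rew Thad Ohad bon π (H - m) m acts obs s ≤
          betaRecB γ rew Ttr Oem (fun _ _ _ => 0) π (H - m) m acts obs s) :=
  betaRec_optimism_general H γ Ttr Oem Thad Ohad rew bon hThad0 hOhad0 π hconc

end
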